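/- arXiv:2007.05737 — 2 statements merged into one kernel-verified Lean document; each statement's English description precedes it below -/
import Mathlib

section
/- Lemma 3.3(i) (well-definedness and elementary properties of r): For every x > 0 the set {q ∈ ℕ, q ≥ 1 : β(q) ≤ q·x} is nonempty (so q*(x) is well-defined); for every δ > 0 the set {r > 0 : q*(r)·r ≤ δ} is nonempty, bounded above, and contains its supremum, so r(δ) = max{r > 0 : q*(r)·r ≤ δ} is well-defined; moreover, for every a > 0 one has r(a)/2 ≥ r(a/2) and r(a) ≤ a. -/
/-- `β(q) = ∑_{j=q}^∞ Δ(j)`. -/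
noncomputable def betaFn (Δ : ℕ → ℝ) (q : ℕ) : ℝ := ∑' j : ℕ, Δ (j + q)

/-- `q*(x) = min{q ∈ ℕ, q ≥ 1 : β(q) ≤ q·x}`. -/
noncomputable def qstar (Δ : ℕ → ℝ) (x : ℝ) : ℕ :=
  sInf {q : ℕ | 1 ≤ q ∧ betaFn Δ q ≤ (q : ℝ) * x}

/-- `r(δ) = max{r > 0 : q*(r)·r ≤ δ}`. -/
noncomputable def rFn (Δ : ℕ → ℝ) (δ : ℝ) : ℝ :=
  sSup {r : ℝ | 0 < r ∧ (qstar Δ r : ℝ) * r ≤ δ}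

/-!
The tails `β(q)` of a series tend to `0`, so `β(q) ≤ x ≤ q x` for large `q` and `q*(x)`
exists. Since `q*` is nonincreasing and `q*(r) ≥ 1`, the set `S(δ) = {r > 0 : q*(r) r ≤ δ}`
lies below `δ`. For its supremum `R` and any `r ∈ S(δ)` we get `q*(R) r ≤ q*(r) r ≤ δ`,
hence `q*(R) R ≤ δ`: the supremum is attained. Finally `r ↦ 2r` maps `S(a/2)` into `S(a)`.
-/

open Filter Topology

theorem tendsto_betaFn_atTop_zero (Δ : ℕ → ℝ) : Tendsto (betaFn Δ) atTop (𝓝 0) :=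
  tendsto_sum_nat_add Δ

theorem exists_one_le_betaFn_le (Δ : ℕ → ℝ) {x : ℝ} (hx : 0 < x) :
    ∃ q : ℕ, 1 ≤ q ∧ betaFn Δ q ≤ x := by
  obtain ⟨q, hβ, hq⟩ :=
    (((tendsto_betaFn_atTop_zero Δ).eventually_lt_const hx).and (eventually_ge_atTop 1)).exists
  exact ⟨q, hq, hβ.le⟩

theorem qstar_set_nonempty (Δ : ℕ → ℝ) {x : ℝ} (hx : 0 < x) :
    {q : ℕ | 1 ≤ q ∧ betaFn Δ q ≤ (q : ℝ) * x}.Nonempty := by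
  obtain ⟨q, hq, hβ⟩ := exists_one_le_betaFn_le Δ hx
  exact ⟨q, hq, hβ.trans (le_mul_of_one_le_left hx.le (by exact_mod_cast hq))⟩

section qstar

variable {Δ : ℕ → ℝ} {x y : ℝ}

theorem one_le_qstar_and_betaFn_le (hx : 0 < x) :
    1 ≤ qstar Δ x ∧ betaFn Δ (qstar Δ x) ≤ (qstar Δ x : ℝ) * x :=
  Nat.sInf_mem (qstar_set_nonempty Δ hx)

theorem one_le_qstar (hx : 0 < x) : (1 : ℝ) ≤ qstar Δ x := by
  exact_mod_cast (one_le_qstar_and_betaFn_le hx).1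

theorem qstar_le_of_betaFn_le {q : ℕ} (hq : 1 ≤ q) (hβ : betaFn Δ q ≤ (q : ℝ) * x) :
    qstar Δ x ≤ q :=
  Nat.sInf_le ⟨hq, hβ⟩

theorem qstar_le_qstar (hx : 0 < x) (hxy : x ≤ y) : qstar Δ y ≤ qstar Δ x := by
  obtain ⟨hq, hβ⟩ := one_le_qstar_and_betaFn_le (Δ := Δ) hx
  exact qstar_le_of_betaFn_le hq (hβ.trans (by gcongr))

theorem qstar_mul_le_qstar_mul (hx : 0 < x) (hxy : x ≤ y) (c : ℝ) (hc : 0 ≤ c) :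
    (qstar Δ y : ℝ) * c ≤ qstar Δ x * c := by
  gcongr
  exact qstar_le_qstar hx hxy

end qstar

def rSet (Δ : ℕ → ℝ) (δ : ℝ) : Set ℝ := {r : ℝ | 0 < r ∧ (qstar Δ r : ℝ) * r ≤ δ}

section rSet

variable {Δ : ℕ → ℝ} {δ r : ℝ}

theorem rSet_nonempty (hδ : 0 < δ) : (rSet Δ δ).Nonempty := by
  obtain ⟨q, hq, hβ⟩ := exists_one_le_betaFn_le Δ hδ
  have hq_pos : (0 : ℝ) < q := by exact_mod_cast hq
  have hqr : (q : ℝ) * (δ / q) = δ := mul_div_cancel₀ δ hq_pos.ne'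
  have hr : 0 < δ / q := div_pos hδ hq_pos
  refine ⟨δ / q, hr, ?_⟩
  calc (qstar Δ (δ / q) : ℝ) * (δ / q)
      ≤ q * (δ / q) := by
        gcongr
        exact_mod_cast qstar_le_of_betaFn_le hq (hqr.symm ▸ hβ)
    _ = δ := hqr

theorem le_of_mem_rSet (hr : r ∈ rSet Δ δ) : r ≤ δ :=
  (le_mul_of_one_le_left hr.1.le (one_le_qstar hr.1)).trans hr.2

theorem bddAbove_rSet : BddAbove (rSet Δ δ) :=
  ⟨δ, fun _ ↦ le_of_mem_rSet⟩

theorem rFn_mem_rSet (hδ : 0 < δ) : rFn Δ δ ∈ rSet Δ δ := by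
  set R := rFn Δ δ
  obtain ⟨r₀, hr₀⟩ := rSet_nonempty (Δ := Δ) hδ
  have hR : 0 < R := hr₀.1.trans_le (le_csSup bddAbove_rSet hr₀)
  have hqR : (0 : ℝ) < qstar Δ R := zero_lt_one.trans_le (one_le_qstar hR)
  have hbound : ∀ r ∈ rSet Δ δ, r ≤ δ / qstar Δ R := fun r hr ↦ by
    rw [le_div_iff₀' hqR]
    exact (qstar_mul_le_qstar_mul hr.1 (le_csSup bddAbove_rSet hr) r hr.1.le).trans hr.2
  have hRle : R ≤ δ / qstar Δ R := csSup_le (rSet_nonempty hδ) hbound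
  exact ⟨hR, (le_div_iff₀' hqR).1 hRle⟩

theorem two_mul_mem_rSet (hr : r ∈ rSet Δ (δ / 2)) : 2 * r ∈ rSet Δ δ := by
  have h2r : 0 < 2 * r := by linarith [hr.1]
  refine ⟨h2r, ?_⟩
  calc (qstar Δ (2 * r) : ℝ) * (2 * r)
      ≤ qstar Δ r * (2 * r) := qstar_mul_le_qstar_mul hr.1 (by linarith [hr.1]) _ h2r.le
    _ = 2 * (qstar Δ r * r) := by ring
    _ ≤ δ := by linarith [hr.2]

theorem rFn_half_le (hδ : 0 < δ) : rFn Δ (δ / 2) ≤ rFn Δ δ / 2 := by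
  refine csSup_le (rSet_nonempty (half_pos hδ)) fun r hr ↦ ?_
  have : 2 * r ≤ rFn Δ δ := le_csSup bddAbove_rSet (two_mul_mem_rSet hr)
  linarith

theorem rFn_le (hδ : 0 < δ) : rFn Δ δ ≤ δ :=
  le_of_mem_rSet (rFn_mem_rSet hδ)

end rSet

theorem qstar_rFn_well_defined_general (Δ : ℕ → ℝ) :
    (∀ x : ℝ, 0 < x → {q : ℕ | 1 ≤ q ∧ betaFn Δ q ≤ (q : ℝ) * x}.Nonempty) ∧
    (∀ δ : ℝ, 0 < δ →
      {r : ℝ | 0 < r ∧ (qstar Δ r : ℝ) * r ≤ δ}.Nonempty ∧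
      BddAbove {r : ℝ | 0 < r ∧ (qstar Δ r : ℝ) * r ≤ δ} ∧
      rFn Δ δ ∈ {r : ℝ | 0 < r ∧ (qstar Δ r : ℝ) * r ≤ δ}) ∧
    (∀ a : ℝ, 0 < a → rFn Δ (a / 2) ≤ rFn Δ a / 2 ∧ rFn Δ a ≤ a) :=
  ⟨fun _ hx ↦ qstar_set_nonempty Δ hx,
    fun _ hδ ↦ ⟨rSet_nonempty hδ, bddAbove_rSet, rFn_mem_rSet hδ⟩,
    fun _ ha ↦ ⟨rFn_half_le ha, rFn_le ha⟩⟩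

/-- Lemma 3.3(i): `q*` and `r` are well defined (the defining set of `q*` is nonempty;
the defining set of `r` is nonempty, bounded above and contains its supremum), and
`r(a)/2 ≥ r(a/2)` and `r(a) ≤ a` for every `a > 0`. -/
theorem qstar_rFn_well_defined (Δ : ℕ → ℝ)
    (hΔnn : ∀ k, 0 ≤ Δ k) (hΔmono : ∀ k, Δ (k + 1) ≤ Δ k) (hΔsum : Summable Δ) :
    (∀ x : ℝ, 0 < x → {q : ℕ | 1 ≤ q ∧ betaFn Δ q ≤ (q : ℝ) * x}.Nonempty) ∧
    (∀ δ : ℝ, 0 < δ →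
      {r : ℝ | 0 < r ∧ (qstar Δ r : ℝ) * r ≤ δ}.Nonempty ∧
      BddAbove {r : ℝ | 0 < r ∧ (qstar Δ r : ℝ) * r ≤ δ} ∧
      rFn Δ δ ∈ {r : ℝ | 0 < r ∧ (qstar Δ r : ℝ) * r ≤ δ}) ∧
    (∀ a : ℝ, 0 < a → rFn Δ (a / 2) ≤ rFn Δ a / 2 ∧ rFn Δ a ≤ a) :=
  qstar_rFn_well_defined_general Δ
end

section
/- Submultiplicativity transfers from β to q*: Suppose there exists C_β > 0 such that β(q₁·q₂) ≤ C_β·β(q₁)·β(q₂) for all integers q₁, q₂ ≥ 1. Then for all x₁, x₂ > 0 one has q*(C_β·x₁·x₂) ≤ q*(x₁)·q*(x₂). -/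
/-!
Since `β` is nonnegative and bounded by `∑ Δ`, the set defining `q*(x)` is nonempty for `x > 0`, so
`q₁ = q*(x₁)` and `q₂ = q*(x₂)` satisfy `β(qᵢ) ≤ qᵢ xᵢ`. Submultiplicativity then gives
`β(q₁ q₂) ≤ C_β β(q₁) β(q₂) ≤ q₁ q₂ · C_β x₁ x₂`, i.e. `q₁ q₂` is admissible for `C_β x₁ x₂`.
-/

lemma exists_le_natCast_mul_of_le {f : ℕ → ℝ} {B x : ℝ} (hf : ∀ q, f q ≤ B) (hx : 0 < x) :
    ∃ q : ℕ, 1 ≤ q ∧ f q ≤ q * x := by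
  obtain ⟨n, hn⟩ := exists_nat_gt (B / x)
  refine ⟨n + 1, Nat.le_add_left 1 n, ?_⟩
  rw [div_lt_iff₀ hx] at hn
  push_cast
  nlinarith [hf (n + 1)]

section

variable {Δ : ℕ → ℝ}

lemma betaFn_nonneg (hΔ : ∀ k, 0 ≤ Δ k) (q : ℕ) : 0 ≤ betaFn Δ q :=
  tsum_nonneg fun j => hΔ (j + q)

lemma betaFn_le_tsum (hΔ : ∀ k, 0 ≤ Δ k) (q : ℕ) : betaFn Δ q ≤ ∑' k, Δ k := by
  by_cases hs : Summable Δ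
  · exact tsum_comp_le_tsum_of_inj hs hΔ (add_left_injective q)
  · -- junk value: the tail is not summable either, so `β(q) = 0`
    rw [betaFn, tsum_eq_zero_of_not_summable ((summable_nat_add_iff q).not.mpr hs)]
    exact tsum_nonneg hΔ

lemma qstar_le {x : ℝ} {q : ℕ} (hq : 1 ≤ q) (hβ : betaFn Δ q ≤ q * x) : qstar Δ x ≤ q :=
  Nat.sInf_le ⟨hq, hβ⟩

lemma one_le_qstar_and_betaFn_qstar_le (hΔ : ∀ k, 0 ≤ Δ k) {x : ℝ} (hx : 0 < x) :
    1 ≤ qstar Δ x ∧ betaFn Δ (qstar Δ x) ≤ qstar Δ x * x :=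
  Nat.sInf_mem (exists_le_natCast_mul_of_le (betaFn_le_tsum hΔ) hx)

end

theorem qstar_submultiplicative_general (Δ : ℕ → ℝ)
    (hΔnn : ∀ k, 0 ≤ Δ k)
    (Cβ : ℝ) (hCβ : 0 < Cβ)
    (hsub : ∀ q1 q2 : ℕ, 1 ≤ q1 → 1 ≤ q2 →
      betaFn Δ (q1 * q2) ≤ Cβ * betaFn Δ q1 * betaFn Δ q2) :
    ∀ x1 x2 : ℝ, 0 < x1 → 0 < x2 →
      qstar Δ (Cβ * x1 * x2) ≤ qstar Δ x1 * qstar Δ x2 := by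
  intro x1 x2 hx1 hx2
  obtain ⟨hq1, hβ1⟩ := one_le_qstar_and_betaFn_qstar_le hΔnn hx1
  obtain ⟨hq2, hβ2⟩ := one_le_qstar_and_betaFn_qstar_le hΔnn hx2
  set q1 := qstar Δ x1
  set q2 := qstar Δ x2
  refine qstar_le (one_le_mul hq1 hq2) ?_
  calc betaFn Δ (q1 * q2)
      ≤ Cβ * (betaFn Δ q1 * betaFn Δ q2) := by rw [← mul_assoc]; exact hsub q1 q2 hq1 hq2
    _ ≤ Cβ * ((q1 * x1) * (q2 * x2)) := by
        gcongr
        exact betaFn_nonneg hΔnn q2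
    _ = ((q1 * q2 : ℕ) : ℝ) * (Cβ * x1 * x2) := by push_cast; ring

/-- Submultiplicativity transfers from `β` to `q*`: if
`β(q₁·q₂) ≤ C_β·β(q₁)·β(q₂)` for all `q₁, q₂ ≥ 1`, then
`q*(C_β·x₁·x₂) ≤ q*(x₁)·q*(x₂)` for all `x₁, x₂ > 0`. -/
theorem qstar_submultiplicative (Δ : ℕ → ℝ)
    (hΔnn : ∀ k, 0 ≤ Δ k) (hΔmono : ∀ k, Δ (k + 1) ≤ Δ k) (hΔsum : Summable Δ)
    (Cβ : ℝ) (hCβ : 0 < Cβ)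
    (hsub : ∀ q1 q2 : ℕ, 1 ≤ q1 → 1 ≤ q2 →
      betaFn Δ (q1 * q2) ≤ Cβ * betaFn Δ q1 * betaFn Δ q2) :
    ∀ x1 x2 : ℝ, 0 < x1 → 0 < x2 →
      qstar Δ (Cβ * x1 * x2) ≤ qstar Δ x1 * qstar Δ x2 :=
  qstar_submultiplicative_general Δ hΔnn Cβ hCβ hsub
end
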